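/- arXiv:0908.3687 — 2 statements merged into one kernel-verified Lean document; each statement's English description precedes it below -/
import Mathlib

section
/- Let X be a metric space and L ⊆ (0,∞) a level set. The canonical L-tower T_X^L = {(C_λ(x), λ) : x ∈ X, λ ∈ L}, ordered by (C_λ(x),λ) ≤ (C_l(y),l) iff λ ≤ l and C_λ(x) ⊆ C_l(y), is a tower: it is ↑-directed and all its order intervals are finite and linearly ordered. -/
/-!
Above a fixed element `a = (C_μ(x), μ)` of the tower, every element `(C, λ)` satisfies
`C = C_λ(x)`, because `x ∈ C` and chain components partition `X`. Hence the elements above `a`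
are determined by their levels and compared exactly as their levels are, by monotonicity of
`λ ↦ C_λ(x)`. This gives linearity of intervals, and finiteness follows from the finiteness of
`L ∩ [μ, ν]`. Directedness: `C_λ(x)` and `C_μ(y)` lie in `C_l(x)` for any level
`l ≥ max (max λ μ) (dist x y)`.
-/

/-- The `s`-connected component of `x`. -/
def chainComp {X : Type*} [MetricSpace X] (s : ℝ) (x : X) : Set X :=
  {y | Relation.ReflTransGen (fun a b => dist a b ≤ s) x y}

/-- The canonical `L`-tower of a metric space `X`: pairs `(C_λ(x), λ)` with `λ ∈ L`. -/
def CanonTower (X : Type*) [MetricSpace X] (L : Set ℝ) : Type _ :=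
  {p : Set X × ℝ // p.2 ∈ L ∧ ∃ x : X, p.1 = chainComp p.2 x}

/-- The partial order on the canonical `L`-tower:
`(C_λ(x), λ) ≤ (C_l(y), l)` iff `λ ≤ l` and `C_λ(x) ⊆ C_l(y)`. -/
def canonLe {X : Type*} [MetricSpace X] {L : Set ℝ}
    (a b : CanonTower X L) : Prop :=
  a.1.2 ≤ b.1.2 ∧ a.1.1 ⊆ b.1.1

section ChainComp

variable {X : Type*} [MetricSpace X] {s t : ℝ} {x y : X}

lemma mem_chainComp_self (s : ℝ) (x : X) : x ∈ chainComp s x :=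
  Relation.ReflTransGen.refl

lemma mem_chainComp_of_dist_le (h : dist x y ≤ s) : y ∈ chainComp s x :=
  Relation.ReflTransGen.single h

lemma mem_chainComp_comm (h : y ∈ chainComp s x) : x ∈ chainComp s y :=
  Relation.ReflTransGen.mono (fun a b hab => (dist_comm a b).trans_le hab)
    _ _ (Relation.ReflTransGen.swap _ _ h)

lemma chainComp_eq_of_mem (h : y ∈ chainComp s x) : chainComp s x = chainComp s y :=
  Set.ext fun _ => ⟨(mem_chainComp_comm h).trans, h.trans⟩

lemma chainComp_mono (hst : s ≤ t) (x : X) : chainComp s x ⊆ chainComp t x :=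
  fun _ => Relation.ReflTransGen.mono (fun _ _ hab => hab.trans hst) _ _

end ChainComp

namespace CanonTower

variable {X : Type*} [MetricSpace X] {L : Set ℝ}

lemma eq_chainComp_of_mem (c : CanonTower X L) {x : X} (hx : x ∈ c.1.1) :
    c.1.1 = chainComp c.1.2 x := by
  obtain ⟨-, y, hy⟩ := c.2
  rw [hy] at hx ⊢
  exact chainComp_eq_of_mem hx

lemma nonempty (a : CanonTower X L) : a.1.1.Nonempty := by
  obtain ⟨-, x, hx⟩ := a.2
  exact ⟨x, hx ▸ mem_chainComp_self _ _⟩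

lemma canonLe_of_level_le {a u v : CanonTower X L} (hau : canonLe a u) (hav : canonLe a v)
    (huv : u.1.2 ≤ v.1.2) : canonLe u v := by
  obtain ⟨x, hx⟩ := a.nonempty
  refine ⟨huv, ?_⟩
  rw [u.eq_chainComp_of_mem (hau.2 hx), v.eq_chainComp_of_mem (hav.2 hx)]
  exact chainComp_mono huv x

lemma canonLe_total_of_ge {a u v : CanonTower X L} (hau : canonLe a u) (hav : canonLe a v) :
    canonLe u v ∨ canonLe v u :=
  (le_total u.1.2 v.1.2).imp (canonLe_of_level_le hau hav) (canonLe_of_level_le hav hau)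

lemma eq_of_level_eq {a u v : CanonTower X L} (hau : canonLe a u) (hav : canonLe a v)
    (huv : u.1.2 = v.1.2) : u = v := by
  have hu := (canonLe_of_level_le hau hav huv.le).2
  have hv := (canonLe_of_level_le hav hau huv.ge).2
  exact Subtype.ext (Prod.ext (hu.antisymm hv) huv)

lemma finite_Icc (hL : ∀ a ∈ L, ∀ b ∈ L, (L ∩ Set.Icc a b).Finite) (a b : CanonTower X L) :
    {c : CanonTower X L | canonLe a c ∧ canonLe c b}.Finite := by
  have hinj : Set.InjOn (fun c : CanonTower X L => c.1.2)
      {c | canonLe a c ∧ canonLe c b} :=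
    fun _ hu _ hv huv => eq_of_level_eq hu.1 hv.1 huv
  refine Set.Finite.of_finite_image ((hL _ a.2.1 _ b.2.1).subset ?_) hinj
  rintro _ ⟨c, ⟨hac, hcb⟩, rfl⟩
  exact ⟨c.2.1, hac.1, hcb.1⟩

lemma exists_canonLe_canonLe (hL : ∀ r : ℝ, ∃ l ∈ L, r ≤ l) (a b : CanonTower X L) :
    ∃ c : CanonTower X L, canonLe a c ∧ canonLe b c := by
  obtain ⟨-, x, hx⟩ := a.2
  obtain ⟨-, y, hy⟩ := b.2
  obtain ⟨l, hlL, hl⟩ := hL (max (max a.1.2 b.1.2) (dist x y))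
  have hal : a.1.2 ≤ l := by grind
  have hbl : b.1.2 ≤ l := by grind
  have hxy : chainComp l x = chainComp l y :=
    chainComp_eq_of_mem (mem_chainComp_of_dist_le (by grind))
  refine ⟨⟨(chainComp l x, l), hlL, x, rfl⟩, ⟨hal, ?_⟩, ⟨hbl, ?_⟩⟩
  · rw [hx]
    exact chainComp_mono hal x
  · change b.1.1 ⊆ chainComp l x
    rw [hy, hxy]
    exact chainComp_mono hbl y

end CanonTower

theorem canonTower_is_tower_general {X : Type*} [MetricSpace X] (L : Set ℝ)
    (hLsup : ∀ r : ℝ, ∃ l ∈ L, r ≤ l)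
    (hLicc : ∀ a ∈ L, ∀ b ∈ L, (L ∩ Set.Icc a b).Finite) :
    (∀ a b : CanonTower X L, ∃ c : CanonTower X L, canonLe a c ∧ canonLe b c) ∧
    (∀ a b : CanonTower X L, {c : CanonTower X L | canonLe a c ∧ canonLe c b}.Finite) ∧
    (∀ a b : CanonTower X L,
      ∀ u ∈ {c : CanonTower X L | canonLe a c ∧ canonLe c b},
      ∀ v ∈ {c : CanonTower X L | canonLe a c ∧ canonLe c b},
        canonLe u v ∨ canonLe v u) :=
  ⟨CanonTower.exists_canonLe_canonLe hLsup, CanonTower.finite_Icc hLicc,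
    fun _ _ _ hu _ hv => CanonTower.canonLe_total_of_ge hu.1 hv.1⟩

/-- For a metric space `X` and a level set `L ⊆ (0,∞)`, the canonical `L`-tower is a
tower: it is ↑-directed and all its order intervals are finite and linearly ordered. -/
theorem canonTower_is_tower {X : Type*} [MetricSpace X] (L : Set ℝ)
    (hLpos : ∀ l ∈ L, 0 < l)
    (hLsup : ∀ r : ℝ, ∃ l ∈ L, r ≤ l)
    (hLicc : ∀ a ∈ L, ∀ b ∈ L, (L ∩ Set.Icc a b).Finite)
    (hLinf : (∃ a ∈ L, (L ∩ Set.Iic a).Infinite) → ∀ ε : ℝ, 0 < ε → ∃ l ∈ L, l ≤ ε) :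
    (∀ a b : CanonTower X L, ∃ c : CanonTower X L, canonLe a c ∧ canonLe b c) ∧
    (∀ a b : CanonTower X L, {c : CanonTower X L | canonLe a c ∧ canonLe c b}.Finite) ∧
    (∀ a b : CanonTower X L,
      ∀ u ∈ {c : CanonTower X L | canonLe a c ∧ canonLe c b},
      ∀ v ∈ {c : CanonTower X L | canonLe a c ∧ canonLe c b},
        canonLe u v ∨ canonLe v u) :=
  canonTower_is_tower_general L hLsup hLicc
end

section
/- Let X be a metric space and L a level set with 0 ∉ L. Then the canonical map C_L : X → ∂T_X^L is micro-uniform (uniformly continuous). -/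
/-!
Points at distance at most `l` lie in the same `l`-component. Hence if some level `l ≤ ε`
belongs to `L`, then `δ = l` gives `ρ ≤ l ≤ ε`; otherwise every level exceeds `ε`, and
`δ = ε` forces `C_L(x) = C_L(y)`.
-/

open scoped Classical

/-- The canonical ultrametric distance between the branches `C_L(x)` and `C_L(y)` of
the canonical `L`-tower. -/
noncomputable def canonDist {X : Type*} [MetricSpace X] (L : Set ℝ) (x y : X) : ℝ :=
  if ∀ l ∈ L, chainComp l x = chainComp l y then 0
  else sInf {l | l ∈ L ∧ chainComp l x = chainComp l y}

section

variable {X : Type*} [MetricSpace X]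

lemma chainComp_eq_of_dist_le {s : ℝ} {x y : X} (h : dist x y ≤ s) :
    chainComp s x = chainComp s y := by
  ext z
  exact ⟨.head (by rwa [dist_comm]), .head h⟩

lemma canonDist_eq_zero_of_forall {L : Set ℝ} {x y : X}
    (h : ∀ l ∈ L, chainComp l x = chainComp l y) : canonDist L x y = 0 :=
  if_pos h

lemma canonDist_le_of_mem {L : Set ℝ} (hL : BddBelow L) {l : ℝ} (hl : l ∈ L) (hl0 : 0 ≤ l)
    {x y : X} (h : chainComp l x = chainComp l y) : canonDist L x y ≤ l := by
  unfold canonDist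
  split_ifs
  · exact hl0
  · exact csInf_le (hL.mono fun _ hm => hm.1) ⟨hl, h⟩

end

theorem canonMap_microUniform_general {X : Type*} [MetricSpace X] (L : Set ℝ)
    (hLpos : ∀ l ∈ L, 0 < l) :
    ∀ ε : ℝ, 0 < ε → ∃ δ : ℝ, 0 < δ ∧
      ∀ x y : X, dist x y ≤ δ → canonDist L x y ≤ ε := by
  intro ε hε
  have hbdd : BddBelow L := ⟨0, fun l hl => (hLpos l hl).le⟩
  by_cases hsmall : ∃ l ∈ L, l ≤ ε
  · obtain ⟨l, hl, hlε⟩ := hsmall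
    refine ⟨l, hLpos l hl, fun x y hxy => ?_⟩
    exact (canonDist_le_of_mem hbdd hl (hLpos l hl).le (chainComp_eq_of_dist_le hxy)).trans hlε
  · push Not at hsmall
    refine ⟨ε, hε, fun x y hxy => ?_⟩
    rw [canonDist_eq_zero_of_forall fun l hl => chainComp_eq_of_dist_le (hxy.trans (hsmall l hl).le)]
    exact hε.le

/-- If `L` is a level set with `0 ∉ L`, then the canonical map `C_L : X → ∂T_X^L` is
micro-uniform (uniformly continuous). -/
theorem canonMap_microUniform {X : Type*} [MetricSpace X] (L : Set ℝ)
    (hLpos : ∀ l ∈ L, 0 < l)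
    (hLsup : ∀ r : ℝ, ∃ l ∈ L, r ≤ l)
    (hLicc : ∀ a ∈ L, ∀ b ∈ L, (L ∩ Set.Icc a b).Finite)
    (hLinf : (∃ a ∈ L, (L ∩ Set.Iic a).Infinite) → ∀ ε : ℝ, 0 < ε → ∃ l ∈ L, l ≤ ε) :
    ∀ ε : ℝ, 0 < ε → ∃ δ : ℝ, 0 < δ ∧
      ∀ x y : X, dist x y ≤ δ → canonDist L x y ≤ ε :=
  canonMap_microUniform_general L hLpos
end
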